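/- (Minimization version.) Let x̂ solve: minimize f_0(x) over x ∈ Ω with f_i(x) ≤ 0 for i = 1,…,m. Assume each f_j with f_j(x̂) < 0 is upper semicontinuous at x̂, and each f_i is D^+_M-differentiable at x̂. Then there exist λ^0,…,λ^m ≥ 0, not all zero, with λ^i f_i(x̂) = 0 for i = 1,…,m, and Σ_{i=0}^m λ^i D^+_M f_i(x̂)(u) ≥ 0 for all u ∈ E. -/

import Mathlib

open Filter Topology

variable {E : Type*} [NormedAddCommGroup E] [NormedSpace ℝ E]

/-- Difference quotient of `f` at `x` in direction `u`. -/
noncomputable def diniQuot (f : E → ℝ) (x u : E) : ℝ → ℝ :=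
  fun t => (f (x + t • u) - f x) / t

/-- Lower Dini derivative `D⁻ f(x)(u)`. -/
noncomputable def lowerDini (f : E → ℝ) (x u : E) : ℝ :=
  liminf (diniQuot f x u) (𝓝[>] 0)

/-- Upper Dini derivative `D⁺ f(x)(u)`. -/
noncomputable def upperDini (f : E → ℝ) (x u : E) : ℝ :=
  limsup (diniQuot f x u) (𝓝[>] 0)

/-- Modified lower Dini derivative `D⁻_M f(x)(u)`. -/
noncomputable def lowerDiniM (f : E → ℝ) (x u : E) : ℝ :=
  ⨅ w : E, (lowerDini f x (u + w) - lowerDini f x w)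

/-- Modified upper Dini derivative `D⁺_M f(x)(u)`. -/
noncomputable def upperDiniM (f : E → ℝ) (x u : E) : ℝ :=
  ⨆ w : E, (upperDini f x (u + w) - upperDini f x w)

/-- The difference quotients of `f` at `x` in direction `u` are bounded near `0⁺`,
so that the lower/upper Dini derivatives are genuine (finite) values. -/
def DiniFinite (f : E → ℝ) (x u : E) : Prop :=
  IsBoundedUnder (· ≤ ·) (𝓝[>] (0:ℝ)) (diniQuot f x u) ∧
  IsBoundedUnder (· ≥ ·) (𝓝[>] (0:ℝ)) (diniQuot f x u)

/-- Finiteness of the modified lower Dini derivative. -/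
def LowerDiniMFinite (f : E → ℝ) (x u : E) : Prop :=
  BddBelow (Set.range fun w : E => lowerDini f x (u + w) - lowerDini f x w)

/-- Finiteness of the modified upper Dini derivative. -/
def UpperDiniMFinite (f : E → ℝ) (x u : E) : Prop :=
  BddAbove (Set.range fun w : E => upperDini f x (u + w) - upperDini f x w)

/-!
At a minimizer `x̂` no direction `u` decreases the objective and all active constraints at once:
if `D⁺ f_i(x̂)(u) < 0` for every active `i`, a short step along `u` stays in `Ω`, keeps the
inactive constraints negative by upper semicontinuity, and lowers `f₀`. As `D⁺ ≤ D⁺_M`, the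
system `D⁺_M f_i(x̂)(u) < 0` (`i` active) has no solution. The functions `D⁺_M f_i(x̂)` are
sublinear, so separating `0` from the open convex set of vectors that strictly dominate
`(D⁺_M f_i(x̂)(u))_i` for some `u` (a Gordan-type alternative) produces the multipliers.
-/

structure IsSublinear {V : Type*} [AddCommGroup V] [Module ℝ V] (p : V → ℝ) : Prop where
  add_le : ∀ u v, p (u + v) ≤ p u + p v
  smul_eq : ∀ c : ℝ, 0 < c → ∀ u, p (c • u) = c * p u

namespace IsSublinear

variable {V : Type*} [AddCommGroup V] [Module ℝ V] {p : V → ℝ}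

theorem map_zero (hp : IsSublinear p) : p 0 = 0 := by
  have h := hp.smul_eq 2 two_pos 0
  rw [smul_zero] at h
  linarith

end IsSublinear

theorem nonneg_right_of_forall_nonneg_pos_add_mul {a b : ℝ} (h : ∀ t ≥ 0, 0 < a + t * b) :
    0 ≤ b := by
  by_contra! hb
  have := h (-a / b) (div_nonneg_of_nonpos (by linarith [h 0 le_rfl]) hb.le)
  rw [div_mul_cancel₀ _ hb.ne] at this
  linarith

theorem nonneg_left_of_forall_pos_pos_add_mul {a b : ℝ} (h : ∀ t > 0, 0 < a + t * b) :
    0 ≤ a := by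
  by_contra! ha
  have hb : 0 < b := by linarith [h 1 one_pos]
  have := h (-a / b) (div_pos (neg_pos.2 ha) hb)
  rw [div_mul_cancel₀ _ hb.ne'] at this
  linarith

section Alternative

variable {ι V : Type*}

def strictUpperImage (p : ι → V → ℝ) (s : Set ι) : Set (ι → ℝ) :=
  {y | ∃ u, ∀ i ∈ s, p i u < y i}

theorem isOpen_strictUpperImage [Finite ι] (p : ι → V → ℝ) (s : Set ι) :
    IsOpen (strictUpperImage p s) := by
  simp only [strictUpperImage, Set.ofPred_exists, Set.ofPred_forall]
  exact isOpen_iUnion fun u => isOpen_iInter_of_finite fun i => isOpen_iInter_of_finite fun _ =>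
    isOpen_lt continuous_const (continuous_apply i)

theorem convex_strictUpperImage [AddCommGroup V] [Module ℝ V] {p : ι → V → ℝ} {s : Set ι}
    (hp : ∀ i ∈ s, IsSublinear (p i)) :
    Convex ℝ (strictUpperImage p s) := by
  refine convex_iff_forall_pos.2 ?_
  rintro y₁ ⟨u₁, hu₁⟩ y₂ ⟨u₂, hu₂⟩ a b ha hb -
  refine ⟨a • u₁ + b • u₂, fun i hi => ?_⟩
  calc p i (a • u₁ + b • u₂) ≤ p i (a • u₁) + p i (b • u₂) := (hp i hi).add_le _ _
    _ = a * p i u₁ + b * p i u₂ := by rw [(hp i hi).smul_eq a ha, (hp i hi).smul_eq b hb]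
    _ < a * y₁ i + b * y₂ i := by
      gcongr
      exacts [hu₁ i hi, hu₂ i hi]
    _ = (a • y₁ + b • y₂) i := rfl

theorem mem_strictUpperImage_of_pos [AddCommGroup V] [Module ℝ V] {p : ι → V → ℝ} {s : Set ι}
    (hp : ∀ i ∈ s, IsSublinear (p i)) {y : ι → ℝ} (hy : ∀ i ∈ s, 0 < y i) :
    y ∈ strictUpperImage p s :=
  ⟨0, fun i hi => (hp i hi).map_zero ▸ hy i hi⟩

theorem exists_nonneg_sum_mul_nonneg_of_sublinear [Fintype ι] [DecidableEq ι]
    [AddCommGroup V] [Module ℝ V]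
    {p : ι → V → ℝ} {s : Set ι} (hp : ∀ i ∈ s, IsSublinear (p i))
    (h : ∀ u, ∃ i ∈ s, 0 ≤ p i u) :
    ∃ lam : ι → ℝ, (∀ i, 0 ≤ lam i) ∧ lam ≠ 0 ∧ (∀ i ∉ s, lam i = 0) ∧
      ∀ u, 0 ≤ ∑ i, lam i * p i u := by
  set C := strictUpperImage p s
  have h0 : (0 : ι → ℝ) ∉ C := fun ⟨u, hu⟩ =>
    let ⟨i, hi, hpi⟩ := h u; (hu i hi).not_ge hpi
  obtain ⟨φ, hφ⟩ := geometric_hahn_banach_point_open (convex_strictUpperImage hp)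
    (isOpen_strictUpperImage p s) h0
  simp only [map_zero] at hφ
  set lam : ι → ℝ := fun i => φ (Pi.single i 1)
  have hrep : ∀ y, φ y = ∑ i, lam i * y i := fun y => by
    conv_lhs => rw [pi_eq_sum_univ' y]
    simp [lam, map_sum, mul_comm]
  have hperturb : ∀ i t, (i ∉ s ∨ 0 ≤ t) → 0 < φ 1 + t * lam i := fun i t hit => by
    have hmem : 1 + t • Pi.single i 1 ∈ C := mem_strictUpperImage_of_pos hp fun j hj => by
      rcases eq_or_ne j i with rfl | hji
      · rcases hit with hi | ht
        · exact absurd hj hi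
        · simp only [Pi.add_apply, Pi.one_apply, Pi.smul_apply, Pi.single_eq_same, smul_eq_mul,
            mul_one]
          linarith
      · simp [hji]
    simpa [lam] using hφ _ hmem
  have hlam_nonneg : ∀ i, 0 ≤ lam i := fun i =>
    nonneg_right_of_forall_nonneg_pos_add_mul fun t ht => hperturb i t (.inr ht)
  refine ⟨lam, hlam_nonneg, ?_, fun i hi => ?_, fun u => ?_⟩
  · intro hlam
    have := hφ 1 (mem_strictUpperImage_of_pos hp fun _ _ => one_pos)
    simp [hrep, hlam] at this
  · have := nonneg_right_of_forall_nonneg_pos_add_mul (a := φ 1) (b := -lam i) fun t _ =>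
      by simpa using hperturb i (-t) (.inl hi)
    linarith [hlam_nonneg i]
  · have hsum := nonneg_left_of_forall_pos_pos_add_mul (a := φ fun i => p i u) (b := φ 1)
      fun ε hε => by
        simpa [mul_comm ε] using hφ ((fun i => p i u) + ε • 1) ⟨u, fun i _ => by simpa⟩
    simpa [hrep] using hsum

end Alternative

theorem limsup_comp_mul_left_nhdsGT {β : Type*} [ConditionallyCompleteLattice β] (g : ℝ → β)
    {c : ℝ} (hc : 0 < c) :
    limsup (fun t => g (c * t)) (𝓝[>] 0) = limsup g (𝓝[>] 0) := by
  have hmap : map (c * ·) (𝓝[>] (0 : ℝ)) = 𝓝[>] 0 := by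
    conv_lhs => rw [← comap_mulLeft_nhdsGT_zero hc]
    exact map_comap_of_surjective (mul_left_surjective₀ hc.ne') _
  conv_rhs => rw [← hmap]
  exact limsup_comp g (c * ·) _

section Dini

variable {f : E → ℝ} {x u : E}

theorem diniQuot_smul (c : ℝ) :
    diniQuot f x (c • u) = fun t => c * diniQuot f x u (c * t) := by
  funext t
  simp only [diniQuot, smul_smul]
  rcases eq_or_ne c 0 with rfl | hc
  · simp
  rcases eq_or_ne t 0 with rfl | ht
  · simp
  field_simp

theorem upperDini_smul (hf : DiniFinite f x u) {c : ℝ} (hc : 0 < c) :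
    upperDini f x (c • u) = c * upperDini f x u := by
  rw [upperDini, upperDini, diniQuot_smul,
    limsup_comp_mul_left_nhdsGT (fun s => c * diniQuot f x u s) hc]
  exact ((monotone_mul_left_of_nonneg hc.le).map_limsup_of_continuousAt _
    (continuous_const_mul c).continuousAt hf.1 hf.2.isCoboundedUnder_flip).symm

theorem upperDini_zero : upperDini f x 0 = 0 := by
  have h : diniQuot f x 0 = fun _ => 0 := by
    funext t
    simp [diniQuot]
  rw [upperDini, h, limsup_const]

theorem upperDini_le_upperDiniM (hM : UpperDiniMFinite f x u) :
    upperDini f x u ≤ upperDiniM f x u := by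
  calc upperDini f x u = upperDini f x (u + 0) - upperDini f x 0 := by simp [upperDini_zero]
    _ ≤ upperDiniM f x u := le_ciSup hM 0

theorem isSublinear_upperDiniM (hf : ∀ v, DiniFinite f x v) (hM : ∀ v, UpperDiniMFinite f x v) :
    IsSublinear (upperDiniM f x) where
  add_le u v := ciSup_le fun w => by
    have hu : _ ≤ upperDiniM f x u := le_ciSup (hM u) (v + w)
    have hv : _ ≤ upperDiniM f x v := le_ciSup (hM v) w
    simp only [add_assoc] at hu ⊢
    linarith
  smul_eq c hc u := by
    have hsurj : Function.Surjective (c • · : E → E) := fun w =>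
      ⟨c⁻¹ • w, smul_inv_smul₀ hc.ne' w⟩
    rw [upperDiniM, upperDiniM, Real.mul_iSup_of_nonneg hc.le, ← hsurj.iSup_comp]
    congr 1 with w
    rw [← smul_add, upperDini_smul (hf _) hc, upperDini_smul (hf _) hc, mul_sub]

theorem eventually_lt_of_upperDini_neg
    (hf : IsBoundedUnder (· ≤ ·) (𝓝[>] (0 : ℝ)) (diniQuot f x u)) (h : upperDini f x u < 0) :
    ∀ᶠ t in 𝓝[>] (0 : ℝ), f (x + t • u) < f x := by
  filter_upwards [eventually_lt_of_limsup_lt h hf, self_mem_nhdsWithin] with t hq (ht : 0 < t)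
  rw [diniQuot, div_neg_iff] at hq
  rcases hq with ⟨-, ht'⟩ | ⟨hlt, -⟩
  · exact absurd ht ht'.not_gt
  · linarith

end Dini

theorem exists_active_upperDini_nonneg {m : ℕ} {Ω : Set E} (hΩ : IsOpen Ω)
    {f : Fin (m + 1) → E → ℝ} {xh : E} (hx : xh ∈ Ω)
    (hfeas : ∀ i : Fin (m + 1), i ≠ 0 → f i xh ≤ 0)
    (hmin : ∀ x ∈ Ω, (∀ i : Fin (m + 1), i ≠ 0 → f i x ≤ 0) → f 0 xh ≤ f 0 x)
    (husc : ∀ i : Fin (m + 1), i ≠ 0 → f i xh < 0 → UpperSemicontinuousAt (f i) xh)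
    (u : E) (hbdd : ∀ i, IsBoundedUnder (· ≤ ·) (𝓝[>] (0 : ℝ)) (diniQuot (f i) xh u)) :
    ∃ i, (i = 0 ∨ f i xh = 0) ∧ 0 ≤ upperDini (f i) xh u := by
  by_contra! hneg
  have hdesc : ∀ i, (i = 0 ∨ f i xh = 0) → ∀ᶠ t in 𝓝[>] (0 : ℝ), f i (xh + t • u) < f i xh :=
    fun i hi => eventually_lt_of_upperDini_neg (hbdd i) (hneg i hi)
  have hpath : Tendsto (fun t : ℝ => xh + t • u) (𝓝[>] 0) (𝓝 xh) :=
    tendsto_nhdsWithin_of_tendsto_nhds (Continuous.tendsto' (by fun_prop) 0 xh (by simp))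
  have hfeas_near : ∀ i, ∀ᶠ t in 𝓝[>] (0 : ℝ), i ≠ 0 → f i (xh + t • u) ≤ 0 := by
    intro i
    rcases eq_or_ne i 0 with rfl | hi
    · exact .of_forall fun _ h => absurd rfl h
    rcases (hfeas i hi).eq_or_lt with hact | hinact
    · filter_upwards [hdesc i (.inr hact)] with t ht _
      linarith
    · filter_upwards [hpath.eventually (husc i hi hinact 0 hinact)] with t ht _
      exact ht.le
  obtain ⟨t, htΩ, hdec, htfeas⟩ := (hpath.eventually (hΩ.mem_nhds hx) |>.and <|
    (hdesc 0 (.inl rfl)).and (eventually_all.2 hfeas_near)).exists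
  exact (hmin _ htΩ htfeas).not_gt hdec

theorem john_dini_min_general (m : ℕ) (Ω : Set E) (hΩ : IsOpen Ω)
    (f : Fin (m + 1) → E → ℝ) (xh : E) (hx : xh ∈ Ω)
    (hfeas : ∀ i : Fin (m + 1), i ≠ 0 → f i xh ≤ 0)
    (hmin : ∀ x ∈ Ω, (∀ i : Fin (m + 1), i ≠ 0 → f i x ≤ 0) → f 0 xh ≤ f 0 x)
    (husc : ∀ i : Fin (m + 1), i ≠ 0 → f i xh < 0 → UpperSemicontinuousAt (f i) xh)
    (hfin : ∀ i u, DiniFinite (f i) xh u)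
    (hMfin : ∀ i u, UpperDiniMFinite (f i) xh u) :
    ∃ lam : Fin (m + 1) → ℝ,
      (∀ i, 0 ≤ lam i) ∧ lam ≠ 0 ∧
      (∀ i : Fin (m + 1), i ≠ 0 → lam i * f i xh = 0) ∧
      ∀ u : E, 0 ≤ ∑ i, lam i * upperDiniM (f i) xh u := by
  have hno_descent : ∀ u, ∃ i ∈ {i | i = 0 ∨ f i xh = 0}, 0 ≤ upperDiniM (f i) xh u := fun u =>
    let ⟨i, hi, hD⟩ := exists_active_upperDini_nonneg hΩ hx hfeas hmin husc u fun i => (hfin i u).1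
    ⟨i, hi, hD.trans (upperDini_le_upperDiniM (hMfin i u))⟩
  obtain ⟨lam, hlam_nonneg, hlam_ne, hlam_inactive, hlam_sum⟩ :=
    exists_nonneg_sum_mul_nonneg_of_sublinear
      (fun i _ => isSublinear_upperDiniM (hfin i) (hMfin i)) hno_descent
  refine ⟨lam, hlam_nonneg, hlam_ne, fun i hi => ?_, hlam_sum⟩
  by_cases hfi : f i xh = 0
  · rw [hfi, mul_zero]
  · rw [hlam_inactive i (by simp [hi, hfi]), zero_mul]

/-- minimization version: if `xh` minimizes `f 0` over
`{x ∈ Ω : f i x ≤ 0, 1 ≤ i ≤ m}`, the inactive constraints are upper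
semicontinuous at `xh`, and all functions are `D⁺_M`-differentiable at `xh`,
then nonnegative multipliers, not all zero, exist with complementary
slackness and `∑ i, lam i * D⁺_M f_i(xh)(u) ≥ 0` for all `u`. -/
theorem john_dini_min (m : ℕ) (Ω : Set E) (hΩ : IsOpen Ω) (hΩne : Ω.Nonempty)
    (f : Fin (m + 1) → E → ℝ) (xh : E) (hx : xh ∈ Ω)
    (hfeas : ∀ i : Fin (m + 1), i ≠ 0 → f i xh ≤ 0)
    (hmin : ∀ x ∈ Ω, (∀ i : Fin (m + 1), i ≠ 0 → f i x ≤ 0) → f 0 xh ≤ f 0 x)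
    (husc : ∀ i : Fin (m + 1), i ≠ 0 → f i xh < 0 → UpperSemicontinuousAt (f i) xh)
    (hfin : ∀ i u, DiniFinite (f i) xh u)
    (hMfin : ∀ i u, UpperDiniMFinite (f i) xh u) :
    ∃ lam : Fin (m + 1) → ℝ,
      (∀ i, 0 ≤ lam i) ∧ lam ≠ 0 ∧
      (∀ i : Fin (m + 1), i ≠ 0 → lam i * f i xh = 0) ∧
      ∀ u : E, 0 ≤ ∑ i, lam i * upperDiniM (f i) xh u :=
  john_dini_min_general m Ω hΩ f xh hx hfeas hmin husc hfin hMfin
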